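/- Uniqueness of J': If (P_L,T_L) →^τ (P_R,T_R) is a quasi rule, J a patch for C and P_L with a fixed adherence map h_L, and (J', h_R), (J'', h_R') are two pairs of a patch for C and P_R with adherence map to T_R satisfying the bijection condition of the rewrite relation (with respect to the same h_L), then there is an isomorphism between C ·_{J'} P_R and C ·_{J''} P_R that is the identity on C and P_R. -/
import Mathlib


namespace PGR

structure Graph (V E L : Type) where
  Vs : Set V
  Es : Set E
  finV : Vs.Finite
  finE : Es.Finite
  src : E → V
  tgt : E → V
  lab : E → L

variable {V E L : Type}

/-- Well-formedness: every edge's endpoints lie in the vertex set. -/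
def Graph.WF (G : Graph V E L) : Prop :=
  ∀ e ∈ G.Es, G.src e ∈ G.Vs ∧ G.tgt e ∈ G.Vs

/-- A graph is simple if edges are determined by source, target and label. -/
def Graph.Simple (G : Graph V E L) : Prop :=
  ∀ e ∈ G.Es, ∀ e' ∈ G.Es,
    G.src e = G.src e' → G.tgt e = G.tgt e' → G.lab e = G.lab e' → e = e'

/-- Disjointness of graphs (vertex and edge sets). -/
def Disj {L₁ L₂ : Type} (G : Graph V E L₁) (H : Graph V E L₂) : Prop :=
  G.Vs ∩ H.Vs = ∅ ∧ G.Es ∩ H.Es = ∅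

/-- J is a patch for context graph C and match graph M. -/
def IsPatch {L₁ L₂ L₃ : Type} (C : Graph V E L₁) (M : Graph V E L₂)
    (J : Graph V E L₃) : Prop :=
  J.Es ∩ (C.Es ∪ M.Es) = ∅ ∧
  J.Vs = J.src '' J.Es ∪ J.tgt '' J.Es ∧
  ∀ e ∈ J.Es,
    (J.src e ∈ C.Vs ∧ J.tgt e ∈ M.Vs) ∨
    (J.src e ∈ M.Vs ∧ J.tgt e ∈ C.Vs) ∨
    (J.src e ∈ M.Vs ∧ J.tgt e ∈ M.Vs)

/-- The trivial one-node graph on the context node □ (here `sq`). -/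
def trivialGraph (E : Type) (sq : V) : Graph V E Unit where
  Vs := {sq}
  Es := ∅
  finV := Set.finite_singleton _
  finE := Set.finite_empty
  src := fun _ => sq
  tgt := fun _ => sq
  lab := fun _ => ()

/-- T is a patch type for M with context node `sq` (= □). -/
def IsPatchType {L₂ : Type} (sq : V) (M : Graph V E L₂) (T : Graph V E Unit) : Prop :=
  sq ∉ M.Vs ∧ IsPatch (trivialGraph E sq) M T

open Classical in
/-- Graph union (intended for graphs with disjoint edge sets). -/
noncomputable def Graph.union (G H : Graph V E L) : Graph V E L where
  Vs := G.Vs ∪ H.Vs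
  Es := G.Es ∪ H.Es
  finV := G.finV.union H.finV
  finE := G.finE.union H.finE
  src := fun e => if e ∈ G.Es then G.src e else H.src e
  tgt := fun e => if e ∈ G.Es then G.tgt e else H.tgt e
  lab := fun e => if e ∈ G.Es then G.lab e else H.lab e

/-- Patch composition C ·_J M = C ∪ J ∪ M. -/
noncomputable def comp (C J M : Graph V E L) : Graph V E L :=
  (C.union J).union M

/-- Equality of graphs (functions compared on the edge set only). -/
def Graph.Eq (G H : Graph V E L) : Prop :=
  G.Vs = H.Vs ∧ G.Es = H.Es ∧
  ∀ e ∈ G.Es, G.src e = H.src e ∧ G.tgt e = H.tgt e ∧ G.lab e = H.lab e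

/-- A graph renaming: bijections on vertices and edges. -/
structure Renaming (V E : Type) where
  rV : V ≃ V
  rE : E ≃ E

/-- The φ-renaming of a graph. -/
def Renaming.apply (φ : Renaming V E) (G : Graph V E L) : Graph V E L where
  Vs := φ.rV '' G.Vs
  Es := φ.rE '' G.Es
  finV := G.finV.image _
  finE := G.finE.image _
  src := fun e => φ.rV (G.src (φ.rE.symm e))
  tgt := fun e => φ.rV (G.tgt (φ.rE.symm e))
  lab := fun e => G.lab (φ.rE.symm e)

/-- Graph isomorphism: existence of a renaming φ with φ(G) = H. -/
def Iso (G H : Graph V E L) : Prop :=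
  ∃ φ : Renaming V E, (φ.apply G).Eq H

/-- Patch edge j adheres to patch type edge t. -/
def AdheresEdge {L₁ L₂ L₃ : Type} (sq : V) (C : Graph V E L₁) (M : Graph V E L₂)
    (J : Graph V E L₃) (T : Graph V E Unit) (j t : E) : Prop :=
  (J.src j ∈ C.Vs → T.src t = sq) ∧
  (J.src j ∈ M.Vs → T.src t = J.src j) ∧
  (J.tgt j ∈ C.Vs → T.tgt t = sq) ∧
  (J.tgt j ∈ M.Vs → T.tgt t = J.tgt j)

/-- h is an adherence map from patch J to patch type T. -/
def AdherenceMap {L₁ L₂ L₃ : Type} (sq : V) (C : Graph V E L₁) (M : Graph V E L₂)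
    (J : Graph V E L₃) (T : Graph V E Unit) (h : E → E) : Prop :=
  ∀ j ∈ J.Es, h j ∈ T.Es ∧ AdheresEdge sq C M J T j (h j)

open Classical in
/-- cxt_h(e): the context node involved in patch edge e, if any. -/
noncomputable def cxt {L₃ : Type} (sq : V) (J : Graph V E L₃) (T : Graph V E Unit)
    (h : E → E) (e : E) : Set V :=
  if T.src (h e) = sq then {J.src e}
  else if T.tgt (h e) = sq then {J.tgt e}
  else ∅

/-- A (quasi) patch graph rewrite rule: two schemes and a trace function. -/
structure Rule (V E L : Type) where
  PL : Graph V E L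
  TL : Graph V E Unit
  PR : Graph V E L
  TR : Graph V E Unit
  tr : E → E

/-- Well-formedness of a quasi rule, including the trace condition. -/
def Rule.WF (sq : V) (r : Rule V E L) : Prop :=
  IsPatchType sq r.PL r.TL ∧ IsPatchType sq r.PR r.TR ∧
  ∀ e ∈ r.TR.Es, r.tr e ∈ r.TL.Es ∧
    ((r.TR.src e = sq ∨ r.TR.tgt e = sq) →
      (r.TL.src (r.tr e) = sq ∨ r.TL.tgt (r.tr e) = sq))

/-- Rule isomorphism: a renaming fixing □ relating the schemes and commuting with the traces. -/
def Rule.Iso (sq : V) (r r' : Rule V E L) : Prop :=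
  ∃ φ : Renaming V E, φ.rV sq = sq ∧
    (φ.apply r.PL).Eq r'.PL ∧ (φ.apply r.TL).Eq r'.TL ∧
    (φ.apply r.PR).Eq r'.PR ∧ (φ.apply r.TR).Eq r'.TR ∧
    ∀ e ∈ r.TR.Es, φ.rE (r.tr e) = r'.tr (φ.rE e)

/-- Preimage of t under h inside the edge set S. -/
def preim (S : Set E) (h : E → E) (t : E) : Set E := {e | e ∈ S ∧ h e = t}

/-- Condition (iv) of the rewrite relation: fiberwise bijections preserving labels
and with cxt containment. -/
def BijCond (sq : V) (r : Rule V E L) (J J' : Graph V E L) (hL hR : E → E) : Prop :=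
  ∀ t ∈ r.TR.Es, ∃ σ : E → E,
    Set.BijOn σ (preim J'.Es hR t) (preim J.Es hL (r.tr t)) ∧
    ∀ e ∈ preim J'.Es hR t,
      J'.lab e = J.lab (σ e) ∧ cxt sq J' r.TR hR e ⊆ cxt sq J r.TL hL (σ e)

/-- A rewrite step via a fixed rule r, with context C, left patch J and right patch J'. -/
def StepVia (sq : V) (r : Rule V E L) (C J J' : Graph V E L) : Prop :=
  ∃ hL hR : E → E,
    Disj C r.PL ∧ IsPatch C r.PL J ∧
    Disj C r.PR ∧ IsPatch C r.PR J' ∧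
    AdherenceMap sq C r.PL J r.TL hL ∧
    AdherenceMap sq C r.PR J' r.TR hR ∧
    BijCond sq r J J' hL hR

/-- The rewrite relation induced by a (quasi) patch graph rewrite system R. -/
def Step (sq : V) (R : Set (Rule V E L)) (G H : Graph V E L) : Prop :=
  ∃ r₀ ∈ R, ∃ r : Rule V E L, Rule.Iso sq r₀ r ∧
    ∃ C J J' : Graph V E L, StepVia sq r C J J' ∧
      G.Eq (comp C J r.PL) ∧ H.Eq (comp C J' r.PR)

/-- Subgraph relation. -/
def Subgraph (M G : Graph V E L) : Prop :=
  M.Vs ⊆ G.Vs ∧ M.Es ⊆ G.Es ∧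
  ∀ e ∈ M.Es, M.src e = G.src e ∧ M.tgt e = G.tgt e ∧ M.lab e = G.lab e
open Classical in
theorem exists_perm_of_bijOn {α : Type*} {A B : Set α} (hA : A.Finite) (hB : B.Finite)
    {f : α → α} (h : Set.BijOn f A B) :
    ∃ π : Equiv.Perm α, (∀ x ∈ A, π x = f x) ∧ ∀ x ∉ A ∪ B, π x = x := by
  classical
  set U : Set α := A ∪ B with hU
  have hAU : ∀ {x}, x ∈ A → x ∈ U := fun hx => Or.inl hx
  have hBU : ∀ {x}, x ∈ B → x ∈ U := fun hx => Or.inr hx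
  have hUfin : U.Finite := hA.union hB
  haveI : Finite ↥U := hUfin
  let eAB : {x : ↥U // (x : α) ∈ A} ≃ {x : ↥U // (x : α) ∈ B} :=
    (Equiv.subtypeSubtypeEquivSubtype (fun h => hAU h)).trans
      ((h.equiv f).trans (Equiv.subtypeSubtypeEquivSubtype (fun h => hBU h)).symm)
  let ρ : Equiv.Perm ↥U := eAB.extendSubtype
  let π : Equiv.Perm α := ρ.extendDomain (Equiv.refl ↥U)
  refine ⟨π, ?_, ?_⟩
  · intro x hx
    have hxU : x ∈ U := hAU hx
    have h1 : π x = ↑(ρ ⟨x, hxU⟩) := by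
      simpa using Equiv.Perm.extendDomain_apply_subtype ρ (Equiv.refl ↥U) (b := x) hxU
    rw [h1, Equiv.extendSubtype_apply_of_mem eAB ⟨x, hxU⟩ hx]
    rfl
  · intro x hx
    exact Equiv.Perm.extendDomain_apply_not_subtype ρ (Equiv.refl ↥U) hx

lemma cxt_subsingleton {L₃ : Type} (sq : V) (J : Graph V E L₃) (T : Graph V E Unit)
    (h : E → E) (e : E) : (cxt sq J T h e).Subsingleton := by
  unfold cxt; split_ifs
  · exact Set.subsingleton_singleton
  · exact Set.subsingleton_singleton
  · exact Set.subsingleton_empty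

lemma union_on_left (G H : Graph V E L) {e : E} (he : e ∈ G.Es) :
    (G.union H).src e = G.src e ∧ (G.union H).tgt e = G.tgt e ∧
    (G.union H).lab e = G.lab e :=
  ⟨if_pos he, if_pos he, if_pos he⟩

lemma union_on_right (G H : Graph V E L) {e : E} (he : e ∉ G.Es) :
    (G.union H).src e = H.src e ∧ (G.union H).tgt e = H.tgt e ∧
    (G.union H).lab e = H.lab e :=
  ⟨if_neg he, if_neg he, if_neg he⟩

lemma comp_on_C (C Jx M : Graph V E L) {e : E} (he : e ∈ C.Es) :
    (comp C Jx M).src e = C.src e ∧ (comp C Jx M).tgt e = C.tgt e ∧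
    (comp C Jx M).lab e = C.lab e := by
  have h1 : e ∈ (C.union Jx).Es := Set.mem_union_left _ he
  have u1 := union_on_left (C.union Jx) M h1
  have u2 := union_on_left C Jx he
  exact ⟨u1.1.trans u2.1, u1.2.1.trans u2.2.1, u1.2.2.trans u2.2.2⟩

lemma comp_on_J (C Jx M : Graph V E L) {e : E} (he : e ∈ Jx.Es) (hC : e ∉ C.Es) :
    (comp C Jx M).src e = Jx.src e ∧ (comp C Jx M).tgt e = Jx.tgt e ∧
    (comp C Jx M).lab e = Jx.lab e := by
  have h1 : e ∈ (C.union Jx).Es := Set.mem_union_right _ he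
  have u1 := union_on_left (C.union Jx) M h1
  have u2 := union_on_right C Jx hC
  exact ⟨u1.1.trans u2.1, u1.2.1.trans u2.2.1, u1.2.2.trans u2.2.2⟩

lemma comp_on_M (C Jx M : Graph V E L) {e : E} (hC : e ∉ C.Es) (hJ : e ∉ Jx.Es) :
    (comp C Jx M).src e = M.src e ∧ (comp C Jx M).tgt e = M.tgt e ∧
    (comp C Jx M).lab e = M.lab e := by
  have h1 : e ∉ (C.union Jx).Es := fun h => ((Set.mem_union _ _ _).mp h).elim hC hJ
  exact union_on_right (C.union Jx) M h1

/-- Uniqueness of J'. Any two right patches (with adherence maps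
to T_R satisfying the bijection condition w.r.t. the same h_L) yield results
isomorphic via a renaming that is the identity on C and P_R. -/
theorem J'_unique (sq : V) (r : Rule V E L) (hWF : r.WF sq)
    (C J : Graph V E L) (hdL : Disj C r.PL) (hdR : Disj C r.PR)
    (hJ : IsPatch C r.PL J)
    (hL : E → E) (hAdL : AdherenceMap sq C r.PL J r.TL hL)
    (J₁ J₂ : Graph V E L) (hR₁ hR₂ : E → E)
    (hP1 : IsPatch C r.PR J₁) (hA1 : AdherenceMap sq C r.PR J₁ r.TR hR₁)
    (hB1 : BijCond sq r J J₁ hL hR₁)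
    (hP2 : IsPatch C r.PR J₂) (hA2 : AdherenceMap sq C r.PR J₂ r.TR hR₂)
    (hB2 : BijCond sq r J J₂ hL hR₂) :
    ∃ φ : Renaming V E,
      (∀ v ∈ C.Vs ∪ r.PR.Vs, φ.rV v = v) ∧
      (∀ e ∈ C.Es ∪ r.PR.Es, φ.rE e = e) ∧
      (φ.apply (comp C J₁ r.PR)).Eq (comp C J₂ r.PR) := by
  classical
  obtain ⟨hTL, ⟨hsqPR, hTRp⟩, htr⟩ := hWF
  have hJv : ∀ (J' : Graph V E L), IsPatch C r.PR J' → J'.Vs ⊆ C.Vs ∪ r.PR.Vs := by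
    intro J' hP' x hx
    rw [hP'.2.1] at hx
    rcases hx with ⟨e, he, rfl⟩ | ⟨e, he, rfl⟩ <;>
      rcases hP'.2.2 e he with ⟨h1, h2⟩ | ⟨h1, h2⟩ | ⟨h1, h2⟩ <;>
      simp [Set.mem_union, h1, h2]
  have hVs : (C.Vs ∪ J₁.Vs) ∪ r.PR.Vs = (C.Vs ∪ J₂.Vs) ∪ r.PR.Vs := by
    have h1 := hJv J₁ hP1
    have h2 := hJv J₂ hP2
    ext x
    simp only [Set.mem_union]
    have hx1 : x ∈ J₁.Vs → x ∈ C.Vs ∨ x ∈ r.PR.Vs := fun h => h1 h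
    have hx2 : x ∈ J₂.Vs → x ∈ C.Vs ∨ x ∈ r.PR.Vs := fun h => h2 h
    tauto
  rcases isEmpty_or_nonempty E with hE | hE
  · refine ⟨⟨Equiv.refl V, Equiv.refl E⟩, fun v _ => rfl, fun e _ => rfl, ?_, ?_, ?_⟩
    · show (Equiv.refl V) '' ((C.Vs ∪ J₁.Vs) ∪ r.PR.Vs) = (C.Vs ∪ J₂.Vs) ∪ r.PR.Vs
      rw [Equiv.coe_refl, Set.image_id, hVs]
    · show ⇑(Equiv.refl E) '' ((C.Es ∪ J₁.Es) ∪ r.PR.Es) = (C.Es ∪ J₂.Es) ∪ r.PR.Es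
      rw [Set.eq_empty_of_isEmpty ((C.Es ∪ J₁.Es) ∪ r.PR.Es),
        Set.eq_empty_of_isEmpty ((C.Es ∪ J₂.Es) ∪ r.PR.Es), Set.image_empty]
    · intro e _
      exact isEmptyElim e
  -- choose fiberwise bijections
  have hB1' : ∀ t, ∃ σ : E → E, t ∈ r.TR.Es →
      Set.BijOn σ (preim J₁.Es hR₁ t) (preim J.Es hL (r.tr t)) ∧
      ∀ e ∈ preim J₁.Es hR₁ t,
        J₁.lab e = J.lab (σ e) ∧ cxt sq J₁ r.TR hR₁ e ⊆ cxt sq J r.TL hL (σ e) := by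
    intro t
    by_cases ht : t ∈ r.TR.Es
    · exact (hB1 t ht).imp fun σ h => fun _ => h
    · exact ⟨id, fun h => absurd h ht⟩
  have hB2' : ∀ t, ∃ σ : E → E, t ∈ r.TR.Es →
      Set.BijOn σ (preim J₂.Es hR₂ t) (preim J.Es hL (r.tr t)) ∧
      ∀ e ∈ preim J₂.Es hR₂ t,
        J₂.lab e = J.lab (σ e) ∧ cxt sq J₂ r.TR hR₂ e ⊆ cxt sq J r.TL hL (σ e) := by
    intro t
    by_cases ht : t ∈ r.TR.Es
    · exact (hB2 t ht).imp fun σ h => fun _ => h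
    · exact ⟨id, fun h => absurd h ht⟩
  choose σ₁ hσ₁ using hB1'
  choose σ₂ hσ₂ using hB2'
  -- the edge correspondence J₁.Es → J₂.Es
  set F : E → E :=
    fun j => Function.invFunOn (σ₂ (hR₁ j)) (preim J₂.Es hR₂ (hR₁ j)) (σ₁ (hR₁ j) j)
    with hFdef
  have keyF : ∀ j ∈ J₁.Es, F j ∈ preim J₂.Es hR₂ (hR₁ j) ∧
      σ₂ (hR₁ j) (F j) = σ₁ (hR₁ j) j := by
    intro j hj
    have ht : hR₁ j ∈ r.TR.Es := (hA1 j hj).1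
    have hm : σ₁ (hR₁ j) j ∈ preim J.Es hL (r.tr (hR₁ j)) :=
      (hσ₁ _ ht).1.mapsTo ⟨hj, rfl⟩
    have hex : ∃ a ∈ preim J₂.Es hR₂ (hR₁ j), σ₂ (hR₁ j) a = σ₁ (hR₁ j) j := by
      obtain ⟨a, ha, hav⟩ := (hσ₂ _ ht).1.surjOn hm
      exact ⟨a, ha, hav⟩
    exact ⟨Function.invFunOn_mem hex, Function.invFunOn_eq hex⟩
  have hFbij : Set.BijOn F J₁.Es J₂.Es := by
    refine ⟨fun j hj => ((keyF j hj).1).1, ?_, ?_⟩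
    · intro j hj j' hj' heq
      have h1 := keyF j hj
      have h2 := keyF j' hj'
      have htt : hR₁ j = hR₁ j' := by
        rw [← h1.1.2, ← h2.1.2, heq]
      have ht : hR₁ j ∈ r.TR.Es := (hA1 j hj).1
      apply (hσ₁ _ ht).1.injOn ⟨hj, rfl⟩ ⟨hj', htt.symm⟩
      rw [← h1.2]
      conv_rhs => rw [htt]
      rw [← h2.2, heq, htt]
    · intro k hk
      have ht : hR₂ k ∈ r.TR.Es := (hA2 k hk).1
      have hm : σ₂ (hR₂ k) k ∈ preim J.Es hL (r.tr (hR₂ k)) :=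
        (hσ₂ _ ht).1.mapsTo ⟨hk, rfl⟩
      obtain ⟨j, hjmem, hjval⟩ := (hσ₁ _ ht).1.surjOn hm
      obtain ⟨hj, hjt⟩ := hjmem
      have h1 := keyF j hj
      refine ⟨j, hj, ?_⟩
      apply (hσ₂ _ ht).1.injOn (by rw [← hjt]; exact h1.1) ⟨hk, rfl⟩
      rw [show (hR₂ k) = hR₁ j from hjt.symm] at hjval hm ⊢
      rw [h1.2, hjval]
  -- endpoint/label determination for each right patch
  have endpoints : ∀ (J' : Graph V E L) (hR' : E → E) (σ' : E → E → E),
      IsPatch C r.PR J' → AdherenceMap sq C r.PR J' r.TR hR' →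
      (∀ t, t ∈ r.TR.Es →
        Set.BijOn (σ' t) (preim J'.Es hR' t) (preim J.Es hL (r.tr t)) ∧
        ∀ e ∈ preim J'.Es hR' t,
          J'.lab e = J.lab (σ' t e) ∧ cxt sq J' r.TR hR' e ⊆ cxt sq J r.TL hL (σ' t e)) →
      ∀ j ∈ J'.Es,
        ((r.TR.src (hR' j) = sq → J'.src j ∈ cxt sq J r.TL hL (σ' (hR' j) j)) ∧
         (r.TR.src (hR' j) ≠ sq → J'.src j = r.TR.src (hR' j))) ∧
        ((r.TR.tgt (hR' j) = sq → J'.tgt j ∈ cxt sq J r.TL hL (σ' (hR' j) j)) ∧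
         (r.TR.tgt (hR' j) ≠ sq → J'.tgt j = r.TR.tgt (hR' j))) ∧
        J'.lab j = J.lab (σ' (hR' j) j) := by
    intro J' hR' σ' hP' hA' hσ' j hj
    have ht : hR' j ∈ r.TR.Es := (hA' j hj).1
    have hadh := (hA' j hj).2
    have hprop := (hσ' _ ht).2 j ⟨hj, rfl⟩
    -- structure of the patch-type edge
    have hTcases := hTRp.2.2 (hR' j) ht
    simp only [trivialGraph, Set.mem_singleton_iff] at hTcases
    have hsrc_cases : r.TR.src (hR' j) = sq ∨ r.TR.src (hR' j) ∈ r.PR.Vs := by tauto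
    have htgt_cases : r.TR.tgt (hR' j) = sq ∨ r.TR.tgt (hR' j) ∈ r.PR.Vs := by tauto
    have hsrc_ne_of_tgt : r.TR.tgt (hR' j) = sq → r.TR.src (hR' j) ≠ sq := by
      intro h1 h2
      rcases hTcases with ⟨_, hb⟩ | ⟨ha, _⟩ | ⟨ha, _⟩
      · exact hsqPR (h1 ▸ hb)
      · exact hsqPR (h2 ▸ ha)
      · exact hsqPR (h2 ▸ ha)
    have hJcases := hP'.2.2 j hj
    refine ⟨⟨?_, ?_⟩, ⟨?_, ?_⟩, hprop.1⟩
    · intro hs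
      have hcxt : cxt sq J' r.TR hR' j = {J'.src j} := by
        unfold cxt; rw [if_pos hs]
      exact hprop.2 (hcxt ▸ rfl)
    · intro hs
      have hPRsrc : r.TR.src (hR' j) ∈ r.PR.Vs := hsrc_cases.resolve_left hs
      have hsrcPR : J'.src j ∈ r.PR.Vs := by
        rcases hJcases with ⟨h1, _⟩ | ⟨h1, _⟩ | ⟨h1, _⟩
        · exact absurd (hadh.1 h1) hs
        · exact h1
        · exact h1
      exact (hadh.2.1 hsrcPR).symm
    · intro hs
      have hcxt : cxt sq J' r.TR hR' j = {J'.tgt j} := by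
        unfold cxt; rw [if_neg (hsrc_ne_of_tgt hs), if_pos hs]
      exact hprop.2 (hcxt ▸ rfl)
    · intro hs
      have hPRtgt : r.TR.tgt (hR' j) ∈ r.PR.Vs := htgt_cases.resolve_left hs
      have htgtPR : J'.tgt j ∈ r.PR.Vs := by
        rcases hJcases with ⟨_, h1⟩ | ⟨_, h1⟩ | ⟨_, h1⟩
        · exact h1
        · exact absurd (hadh.2.2.1 h1) hs
        · exact h1
      exact (hadh.2.2.2 htgtPR).symm
  -- matching of endpoints and labels along F
  have match3 : ∀ j ∈ J₁.Es,
      J₁.src j = J₂.src (F j) ∧ J₁.tgt j = J₂.tgt (F j) ∧ J₁.lab j = J₂.lab (F j) := by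
    intro j hj
    obtain ⟨⟨hFJ2, hFt⟩, hFσ⟩ := keyF j hj
    have ep1 := endpoints J₁ hR₁ σ₁ hP1 hA1 (fun t ht => hσ₁ t ht) j hj
    have ep2 := endpoints J₂ hR₂ σ₂ hP2 hA2 (fun t ht => hσ₂ t ht) (F j) hFJ2
    rw [hFt, hFσ] at ep2
    have hsub := cxt_subsingleton sq J r.TL hL (σ₁ (hR₁ j) j)
    refine ⟨?_, ?_, ep1.2.2.trans ep2.2.2.symm⟩
    · by_cases hs : r.TR.src (hR₁ j) = sq
      · exact hsub (ep1.1.1 hs) (ep2.1.1 hs)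
      · exact (ep1.1.2 hs).trans (ep2.1.2 hs).symm
    · by_cases hs : r.TR.tgt (hR₁ j) = sq
      · exact hsub (ep1.2.1.1 hs) (ep2.2.1.1 hs)
      · exact (ep1.2.1.2 hs).trans (ep2.2.1.2 hs).symm
  -- extend F to a permutation of E
  obtain ⟨π, hπ1, hπ2⟩ := exists_perm_of_bijOn J₁.finE J₂.finE hFbij
  have hπbij : Set.BijOn (⇑π) J₁.Es J₂.Es :=
    hFbij.congr fun x hx => (hπ1 x hx).symm
  -- disjointness facts
  have hJ1disj : ∀ e ∈ J₁.Es, e ∉ C.Es ∧ e ∉ r.PR.Es := by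
    intro e he
    constructor <;> intro hc <;>
      exact Set.eq_empty_iff_forall_notMem.mp hP1.1 e ⟨he, by simp [hc]⟩
  have hJ2disj : ∀ e ∈ J₂.Es, e ∉ C.Es ∧ e ∉ r.PR.Es := by
    intro e he
    constructor <;> intro hc <;>
      exact Set.eq_empty_iff_forall_notMem.mp hP2.1 e ⟨he, by simp [hc]⟩
  have hCPR : ∀ e ∈ r.PR.Es, e ∉ C.Es := by
    intro e he hc
    exact Set.eq_empty_iff_forall_notMem.mp hdR.2 e ⟨hc, he⟩
  have hπid : ∀ e, e ∈ C.Es ∨ e ∈ r.PR.Es → π e = e := by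
    intro e he
    apply hπ2
    intro hmem
    rcases hmem with h | h
    · rcases he with he | he
      · exact (hJ1disj e h).1 he
      · exact (hJ1disj e h).2 he
    · rcases he with he | he
      · exact (hJ2disj e h).1 he
      · exact (hJ2disj e h).2 he
  have hπsymm : ∀ e, e ∈ C.Es ∨ e ∈ r.PR.Es → π.symm e = e := by
    intro e he
    conv_lhs => rw [← hπid e he]
    exact π.symm_apply_apply e
  -- the renaming
  refine ⟨⟨Equiv.refl V, π⟩, fun v _ => rfl, fun e he => hπid e he, ?_, ?_, ?_⟩
  -- vertex sets
  · show (Equiv.refl V) '' ((C.Vs ∪ J₁.Vs) ∪ r.PR.Vs) = (C.Vs ∪ J₂.Vs) ∪ r.PR.Vs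
    rw [Equiv.coe_refl, Set.image_id, hVs]
  -- edge sets
  · show ⇑π '' ((C.Es ∪ J₁.Es) ∪ r.PR.Es) = (C.Es ∪ J₂.Es) ∪ r.PR.Es
    rw [Set.image_union, Set.image_union]
    have hC : ⇑π '' C.Es = C.Es := by
      rw [Set.image_congr (fun a ha => hπid a (Or.inl ha)), Set.image_id']
    have hPR : ⇑π '' r.PR.Es = r.PR.Es := by
      rw [Set.image_congr (fun a ha => hπid a (Or.inr ha)), Set.image_id']
    rw [hC, hPR, hπbij.image_eq]
  -- edge functions
  · intro e he
    have he' : e ∈ (C.Es ∪ J₂.Es) ∪ r.PR.Es := by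
      have : ⇑π '' ((C.Es ∪ J₁.Es) ∪ r.PR.Es) = (C.Es ∪ J₂.Es) ∪ r.PR.Es := by
        rw [Set.image_union, Set.image_union,
          Set.image_congr (fun a ha => hπid a (Or.inl ha)), Set.image_id',
          Set.image_congr (fun a ha => hπid a (Or.inr ha)), Set.image_id',
          hπbij.image_eq]
      rw [← this]; exact he
    show (comp C J₁ r.PR).src (π.symm e) = (comp C J₂ r.PR).src e ∧
      (comp C J₁ r.PR).tgt (π.symm e) = (comp C J₂ r.PR).tgt e ∧
      (comp C J₁ r.PR).lab (π.symm e) = (comp C J₂ r.PR).lab e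
    rcases he' with (heC | heJ2) | hePR
    · rw [hπsymm e (Or.inl heC)]
      have u1 := comp_on_C C J₁ r.PR heC
      have u2 := comp_on_C C J₂ r.PR heC
      exact ⟨u1.1.trans u2.1.symm, u1.2.1.trans u2.2.1.symm, u1.2.2.trans u2.2.2.symm⟩
    · obtain ⟨j, hj, rfl⟩ : ∃ j ∈ J₁.Es, π j = e := by
        rw [← hπbij.image_eq] at heJ2
        obtain ⟨j, hj, hje⟩ := heJ2
        exact ⟨j, hj, hje⟩
      rw [π.symm_apply_apply]
      have hFj : π j = F j := hπ1 j hj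
      have hFJ2 : F j ∈ J₂.Es := hFbij.mapsTo hj
      have u1 := comp_on_J C J₁ r.PR hj (hJ1disj j hj).1
      have u2 := comp_on_J C J₂ r.PR hFJ2 (hJ2disj _ hFJ2).1
      obtain ⟨m1, m2, m3⟩ := match3 j hj
      rw [hFj]
      exact ⟨u1.1.trans (m1.trans u2.1.symm), u1.2.1.trans (m2.trans u2.2.1.symm),
        u1.2.2.trans (m3.trans u2.2.2.symm)⟩
    · rw [hπsymm e (Or.inr hePR)]
      have u1 := comp_on_M C J₁ r.PR (hCPR e hePR)
        (fun h => (hJ1disj e h).2 hePR)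
      have u2 := comp_on_M C J₂ r.PR (hCPR e hePR)
        (fun h => (hJ2disj e h).2 hePR)
      exact ⟨u1.1.trans u2.1.symm, u1.2.1.trans u2.2.1.symm, u1.2.2.trans u2.2.2.symm⟩

end PGR
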